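/- Let f : ℝ → ℝ be continuous with limsup_{|s|→∞} f(s)/s ≤ 0, and let u ∈ L²(Ω) on a finite-measure set Ω. Then for every ν > 0 there exists C_ν ≥ 0 (independent of u) such that ∫_Ω f(u(x))·u(x) dx ≤ ν·‖u‖²_{L²(Ω)} + C_ν. -/

import Mathlib

open MeasureTheory

theorem Continuous.exists_le_add_const_of_le_of_lt_abs {g h : ℝ → ℝ} (hg : Continuous g)
    (h_nonneg : ∀ s, 0 ≤ h s) {R : ℝ} (hgh : ∀ s, R < |s| → g s ≤ h s) :
    ∃ M : ℝ, 0 ≤ M ∧ ∀ s, g s ≤ h s + M := by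
  obtain ⟨B, hB⟩ := (isCompact_Icc (a := -R) (b := R)).bddAbove_image hg.continuousOn
  refine ⟨max B 0, le_max_right _ _, fun s => ?_⟩
  rcases le_or_gt |s| R with hs | hs
  · have hgB : g s ≤ B := hB ⟨s, abs_le.1 hs, rfl⟩
    linarith [h_nonneg s, le_max_left B 0]
  · linarith [hgh s hs, le_max_right B 0]

theorem setIntegral_le_mul_setIntegral_sq_add {α : Type*} [MeasurableSpace α] {μ : Measure α}
    {Ω : Set α} (hΩ : μ Ω < ⊤) {g : ℝ → ℝ} {ν M : ℝ} (hg : ∀ s, g s ≤ ν * s ^ 2 + M)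
    {u : α → ℝ} (hgu : Integrable (fun x => g (u x)) (μ.restrict Ω))
    (hu : Integrable (fun x => u x ^ 2) (μ.restrict Ω)) :
    ∫ x in Ω, g (u x) ∂μ ≤ ν * ∫ x in Ω, u x ^ 2 ∂μ + M * μ.real Ω := by
  have : IsFiniteMeasure (μ.restrict Ω) := isFiniteMeasure_restrict.2 hΩ.ne
  calc ∫ x in Ω, g (u x) ∂μ ≤ ∫ x in Ω, (ν * u x ^ 2 + M) ∂μ :=
        integral_mono hgu ((hu.const_mul ν).add (integrable_const M)) fun x => hg (u x)
    _ = ν * ∫ x in Ω, u x ^ 2 ∂μ + M * μ.real Ω := by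
        rw [integral_add (hu.const_mul ν) (integrable_const M), integral_const_mul,
          setIntegral_const, smul_eq_mul, mul_comm (μ.real Ω)]

theorem stmt_3 {α : Type*} [MeasurableSpace α] (μ : Measure α) (Ω : Set α)
    (hΩ : μ Ω < ⊤) (f : ℝ → ℝ) (hf : Continuous f)
    (hdis : ∀ ν : ℝ, 0 < ν → ∃ R : ℝ, 0 < R ∧ ∀ s : ℝ, R < |s| → f s * s ≤ ν * s ^ 2) :
    ∀ ν : ℝ, 0 < ν → ∃ C : ℝ, 0 ≤ C ∧ ∀ u : α → ℝ,
      Integrable (fun x => f (u x) * u x) (μ.restrict Ω) →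
      Integrable (fun x => (u x) ^ 2) (μ.restrict Ω) →
      ∫ x in Ω, f (u x) * u x ∂μ ≤ ν * ∫ x in Ω, (u x) ^ 2 ∂μ + C := by
  intro ν hν
  obtain ⟨R, -, hR⟩ := hdis ν hν
  obtain ⟨M, hM, hbound⟩ := (hf.mul continuous_id).exists_le_add_const_of_le_of_lt_abs
    (fun s => by positivity) hR
  exact ⟨M * μ.real Ω, by positivity, fun u hfu hu =>
    setIntegral_le_mul_setIntegral_sq_add hΩ hbound hfu hu⟩
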